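/- Each involution s_x, s_y, s_z satisfies s^*Ω = -Ω, where Ω = dy∧dz/(2x+yz-A) is the holomorphic 2-form on the smooth part of S_{A,B,C,D}; consequently every element of Γ = ⟨g_x, g_y, g_z⟩ preserves Ω. -/

import Mathlib

noncomputable section

/-- The involution s_x on ℂ³ (here ℂ³ = Fin 3 → ℂ). -/
def sxE (A : ℂ) : Function.End (Fin 3 → ℂ) :=
  fun p => ![-p 0 - p 1 * p 2 + A, p 1, p 2]

/-- The involution s_y. -/
def syE (B : ℂ) : Function.End (Fin 3 → ℂ) :=
  fun p => ![p 0, -p 1 - p 0 * p 2 + B, p 2]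

/-- The involution s_z. -/
def szE (C : ℂ) : Function.End (Fin 3 → ℂ) :=
  fun p => ![p 0, p 1, -p 2 - p 0 * p 1 + C]

/-- The affine cubic surface S_{A,B,C,D}. -/
def surf (A B C D : ℂ) : Set (Fin 3 → ℂ) :=
  {p | p 0 ^ 2 + p 1 ^ 2 + p 2 ^ 2 + p 0 * p 1 * p 2
    = A * p 0 + B * p 1 + C * p 2 + D}

/-- The gradient of the defining polynomial of S_{A,B,C,D}. -/
def gradf (A B C : ℂ) (p : Fin 3 → ℂ) : Fin 3 → ℂ :=
  ![2 * p 0 + p 1 * p 2 - A, 2 * p 1 + p 0 * p 2 - B, 2 * p 2 + p 0 * p 1 - C]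

/-!
On each level set of `F = x² + y² + z² + xyz - Ax - By - Cz`, the form `Ω` is the Poincaré
residue of `dx ∧ dy ∧ dz / (F - D)`: for tangent vectors `v ⨯₃ w = Ω(v, w) • ∇F`, so that
`Ω = dy ∧ dz / F_x = dz ∧ dx / F_y = dx ∧ dy / F_z`. In this chart-free form, `s^*Ω = -Ω` for
each involution `s` is a polynomial identity (`s_x` fixes `y, z` and negates `F_x`, and similarly
for the others), and the relation `f^*Ω = ε • Ω` is multiplicative under composition, so every
product of two involutions preserves `Ω`.
-/

open Matrix

theorem cross_eq_smul_of_dotProduct_eq_zero {K : Type*} [Field K] {g v w : Fin 3 → K}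
    (hg : g 0 ≠ 0) (hv : g ⬝ᵥ v = 0) (hw : g ⬝ᵥ w = 0) :
    v ⨯₃ w = ((v ⨯₃ w) 0 / g 0) • g := by
  rw [vec3_dotProduct] at hv hw
  ext i
  rw [Pi.smul_apply, smul_eq_mul, div_mul_eq_mul_div, eq_div_iff hg]
  fin_cases i <;> simp only [Fin.zero_eta, Fin.mk_one, Fin.reduceFinMk, cross_apply, cons_val]
  · linear_combination v 2 * hw - w 2 * hv
  · linear_combination w 1 * hv - v 1 * hw

theorem differentiable_sxE (A : ℂ) : Differentiable ℂ (sxE A) :=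
  differentiable_pi.2 fun i => by
    fin_cases i <;> simp only [sxE, Fin.zero_eta, Fin.mk_one, Fin.reduceFinMk, cons_val] <;>
      fun_prop

theorem differentiable_syE (B : ℂ) : Differentiable ℂ (syE B) :=
  differentiable_pi.2 fun i => by
    fin_cases i <;> simp only [syE, Fin.zero_eta, Fin.mk_one, Fin.reduceFinMk, cons_val] <;>
      fun_prop

theorem differentiable_szE (C : ℂ) : Differentiable ℂ (szE C) :=
  differentiable_pi.2 fun i => by
    fin_cases i <;> simp only [szE, Fin.zero_eta, Fin.mk_one, Fin.reduceFinMk, cons_val] <;>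
      fun_prop

theorem fderiv_sxE (A : ℂ) (p v : Fin 3 → ℂ) :
    fderiv ℂ (sxE A) p v = ![-v 0 - (p 1 * v 2 + p 2 * v 1), v 1, v 2] := by
  rw [fderiv_pi fun i => differentiable_pi.1 (differentiable_sxE A) i p]
  ext i
  fin_cases i <;> simp (disch := fun_prop) [sxE, fderiv_fun_sub, fderiv_fun_mul,
    (hasFDerivAt_apply _ p).fderiv]

theorem fderiv_syE (B : ℂ) (p v : Fin 3 → ℂ) :
    fderiv ℂ (syE B) p v = ![v 0, -v 1 - (p 0 * v 2 + p 2 * v 0), v 2] := by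
  rw [fderiv_pi fun i => differentiable_pi.1 (differentiable_syE B) i p]
  ext i
  fin_cases i <;> simp (disch := fun_prop) [syE, fderiv_fun_sub, fderiv_fun_mul,
    (hasFDerivAt_apply _ p).fderiv]

theorem fderiv_szE (C : ℂ) (p v : Fin 3 → ℂ) :
    fderiv ℂ (szE C) p v = ![v 0, v 1, -v 2 - (p 0 * v 1 + p 1 * v 0)] := by
  rw [fderiv_pi fun i => differentiable_pi.1 (differentiable_szE C) i p]
  ext i
  fin_cases i <;> simp (disch := fun_prop) [szE, fderiv_fun_sub, fderiv_fun_mul,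
    (hasFDerivAt_apply _ p).fderiv]

/-- `f^*Ω = ε • Ω` on every level set of `F` at once, with `Ω` read off from
`v ⨯₃ w = Ω(v, w) • ∇F`. -/
def PullsBackResidue (A B C ε : ℂ) (f : (Fin 3 → ℂ) → Fin 3 → ℂ) : Prop :=
  Differentiable ℂ f ∧ ∀ (p v w : Fin 3 → ℂ) (c : ℂ), v ⨯₃ w = c • gradf A B C p →
    fderiv ℂ f p v ⨯₃ fderiv ℂ f p w = (ε * c) • gradf A B C (f p)

namespace PullsBackResidue

variable {A B C ε δ : ℂ} {f g : (Fin 3 → ℂ) → Fin 3 → ℂ}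

theorem id : PullsBackResidue A B C 1 id :=
  ⟨differentiable_id, fun p v w c h => by simpa [fderiv_id] using h⟩

theorem comp (hf : PullsBackResidue A B C ε f) (hg : PullsBackResidue A B C δ g) :
    PullsBackResidue A B C (ε * δ) (f ∘ g) := by
  refine ⟨hf.1.comp hg.1, fun p v w c h => ?_⟩
  rw [fderiv_comp p (hf.1 _) (hg.1 p), ContinuousLinearMap.comp_apply,
    ContinuousLinearMap.comp_apply, hf.2 _ _ _ _ (hg.2 p v w c h), mul_assoc]
  rfl

theorem residue_eq (hf : PullsBackResidue A B C ε f) {p v w : Fin 3 → ℂ}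
    (hp : gradf A B C p 0 ≠ 0) (hfp : gradf A B C (f p) 0 ≠ 0)
    (hv : gradf A B C p ⬝ᵥ v = 0) (hw : gradf A B C p ⬝ᵥ w = 0) :
    (fderiv ℂ f p v ⨯₃ fderiv ℂ f p w) 0 / gradf A B C (f p) 0
      = ε * ((v ⨯₃ w) 0 / gradf A B C p 0) := by
  rw [hf.2 p v w _ (cross_eq_smul_of_dotProduct_eq_zero hp hv hw), Pi.smul_apply, smul_eq_mul,
    mul_div_cancel_right₀ _ hfp]

end PullsBackResidue

theorem pullsBackResidue_sxE (A B C : ℂ) : PullsBackResidue A B C (-1) (sxE A) := by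
  refine ⟨differentiable_sxE A, fun p v w c h => ?_⟩
  simp only [cross_apply, gradf, smul_vec3, vecCons_inj, smul_eq_mul] at h
  obtain ⟨h0, h1, h2, -⟩ := h
  rw [fderiv_sxE, fderiv_sxE, cross_apply, gradf, smul_vec3]
  simp only [sxE, cons_val_zero, cons_val_one, cons_val_two, head_cons, tail_cons]
  exact vec3_eq (by linear_combination h0) (by linear_combination p 2 * h0 - h1)
    (by linear_combination p 1 * h0 - h2)

theorem pullsBackResidue_syE (A B C : ℂ) : PullsBackResidue A B C (-1) (syE B) := by
  refine ⟨differentiable_syE B, fun p v w c h => ?_⟩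
  simp only [cross_apply, gradf, smul_vec3, vecCons_inj, smul_eq_mul] at h
  obtain ⟨h0, h1, h2, -⟩ := h
  rw [fderiv_syE, fderiv_syE, cross_apply, gradf, smul_vec3]
  simp only [syE, cons_val_zero, cons_val_one, cons_val_two, head_cons, tail_cons]
  exact vec3_eq (by linear_combination p 2 * h1 - h0) (by linear_combination h1)
    (by linear_combination p 0 * h1 - h2)

theorem pullsBackResidue_szE (A B C : ℂ) : PullsBackResidue A B C (-1) (szE C) := by
  refine ⟨differentiable_szE C, fun p v w c h => ?_⟩
  simp only [cross_apply, gradf, smul_vec3, vecCons_inj, smul_eq_mul] at h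
  obtain ⟨h0, h1, h2, -⟩ := h
  rw [fderiv_szE, fderiv_szE, cross_apply, gradf, smul_vec3]
  simp only [szE, cons_val_zero, cons_val_one, cons_val_two, head_cons, tail_cons]
  exact vec3_eq (by linear_combination p 1 * h2 - h0) (by linear_combination p 0 * h2 - h1)
    (by linear_combination h2)

def residuePreserving (A B C : ℂ) : Submonoid (Function.End (Fin 3 → ℂ)) where
  carrier := {f | PullsBackResidue A B C 1 f}
  mul_mem' hf hg := (one_mul (1 : ℂ)) ▸ hf.comp hg
  one_mem' := PullsBackResidue.id

theorem closure_le_residuePreserving (A B C : ℂ) :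
    Submonoid.closure {szE C * syE B, sxE A * szE C, syE B * sxE A} ≤ residuePreserving A B C := by
  have mul_mem {f g : Function.End (Fin 3 → ℂ)} (hf : PullsBackResidue A B C (-1) f)
      (hg : PullsBackResidue A B C (-1) g) : f * g ∈ residuePreserving A B C :=
    show PullsBackResidue A B C 1 (f ∘ g) by simpa using hf.comp hg
  rw [Submonoid.closure_le]
  rintro γ (rfl | rfl | rfl)
  · exact mul_mem (pullsBackResidue_szE A B C) (pullsBackResidue_syE A B C)
  · exact mul_mem (pullsBackResidue_sxE A B C) (pullsBackResidue_szE A B C)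
  · exact mul_mem (pullsBackResidue_syE A B C) (pullsBackResidue_sxE A B C)

/-- Each involution s ∈ {s_x, s_y, s_z} satisfies s^*Ω = -Ω, where
Ω = dy∧dz/(2x+yz-A) on the smooth part of S_{A,B,C,D} (expressed on tangent vectors),
and consequently every element of Γ = ⟨g_x, g_y, g_z⟩ (with g_x = s_z∘s_y,
g_y = s_x∘s_z, g_z = s_y∘s_x) preserves Ω. -/
theorem stmt3 (A B C D : ℂ) :
    (∀ s ∈ ({sxE A, syE B, szE C} : Set (Function.End (Fin 3 → ℂ))),
      ∀ p ∈ surf A B C D,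
        2 * p 0 + p 1 * p 2 - A ≠ 0 →
        2 * s p 0 + s p 1 * s p 2 - A ≠ 0 →
        ∀ v w : Fin 3 → ℂ,
          (∑ i, gradf A B C p i * v i) = 0 → (∑ i, gradf A B C p i * w i) = 0 →
          ((fderiv ℂ (s : (Fin 3 → ℂ) → (Fin 3 → ℂ)) p v) 1 *
                (fderiv ℂ (s : (Fin 3 → ℂ) → (Fin 3 → ℂ)) p w) 2
              - (fderiv ℂ (s : (Fin 3 → ℂ) → (Fin 3 → ℂ)) p v) 2 *
                (fderiv ℂ (s : (Fin 3 → ℂ) → (Fin 3 → ℂ)) p w) 1)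
              / (2 * s p 0 + s p 1 * s p 2 - A)
            = -((v 1 * w 2 - v 2 * w 1) / (2 * p 0 + p 1 * p 2 - A)))
    ∧
    (∀ γ ∈ Submonoid.closure
        ({szE C * syE B, sxE A * szE C, syE B * sxE A} : Set (Function.End (Fin 3 → ℂ))),
      ∀ p ∈ surf A B C D,
        2 * p 0 + p 1 * p 2 - A ≠ 0 →
        2 * γ p 0 + γ p 1 * γ p 2 - A ≠ 0 →
        ∀ v w : Fin 3 → ℂ,
          (∑ i, gradf A B C p i * v i) = 0 → (∑ i, gradf A B C p i * w i) = 0 →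
          ((fderiv ℂ (γ : (Fin 3 → ℂ) → (Fin 3 → ℂ)) p v) 1 *
                (fderiv ℂ (γ : (Fin 3 → ℂ) → (Fin 3 → ℂ)) p w) 2
              - (fderiv ℂ (γ : (Fin 3 → ℂ) → (Fin 3 → ℂ)) p v) 2 *
                (fderiv ℂ (γ : (Fin 3 → ℂ) → (Fin 3 → ℂ)) p w) 1)
              / (2 * γ p 0 + γ p 1 * γ p 2 - A)
            = (v 1 * w 2 - v 2 * w 1) / (2 * p 0 + p 1 * p 2 - A)) := by
  refine ⟨fun s hs p _ hp hsp v w hv hw => ?_, fun γ hγ p _ hp hγp v w hv hw => ?_⟩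
  · have hs' : PullsBackResidue A B C (-1) s := by
      rcases hs with rfl | rfl | rfl
      exacts [pullsBackResidue_sxE A B C, pullsBackResidue_syE A B C, pullsBackResidue_szE A B C]
    rw [← neg_one_mul]
    exact hs'.residue_eq hp hsp hv hw
  · rw [← one_mul ((v 1 * w 2 - v 2 * w 1) / _)]
    exact (closure_le_residuePreserving A B C hγ).residue_eq hp hγp hv hw

end
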